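/- arXiv:1307.2532 — 4 statements merged into one kernel-verified Lean document; each statement's English description precedes it below -/
import Mathlib

section
/- Let W be a Möbius transformation and let W̃ be a holomorphic function on a domain Ω ⊂ ℂ satisfying exp(i·W̃(z)) = W(exp(i·z)) for all z ∈ Ω. Then for any z, w ∈ Ω with z − w not a multiple of 2π and W̃(z) − W̃(w) not a multiple of 2π, one has W̃'(z)·cot((W̃(z) − W̃(w))/2) − cot((z − w)/2) = W̃''(z)/W̃'(z). -/
/-!
Put `u = exp (I * z)` and `v = exp (I * w)`. Since
`cot ((s - t) / 2) = I (e^{is} + e^{it}) / (e^{is} - e^{it})`, the two cotangents are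
`I (W u + W v) / (W u - W v)` and `I (u + v) / (u - v)`. Differentiating the lift gives
`W̃' = u W'(u) / W(u) = (ad - bc) u / ((au + b)(cu + d))`, a rational function of `u`, so `W̃''`
is one too and the claim becomes a rational identity in `u` and `v`. Its denominators do not
vanish because `W u ≠ W v` and `W u - W v = (ad - bc)(u - v) / ((cu + d)(cv + d))`.
-/

open Complex Filter Topology

-- Both sides are `0` when `exp (I * s) = exp (I * t)`.
theorem Complex.cot_half_sub_eq_exp_ratio (s t : ℂ) :
    cot ((s - t) / 2) = I * (exp (I * s) + exp (I * t)) / (exp (I * s) - exp (I * t)) := by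
  have hq : exp (I * t) ≠ 0 := exp_ne_zero _
  have hexp : exp (2 * I * ((s - t) / 2)) = exp (I * s) / exp (I * t) := by
    rw [← exp_sub]; ring_nf
  rw [cot_eq_exp_ratio, hexp, div_add_one hq, one_sub_div hq, mul_div_assoc',
    div_div_div_cancel_right₀ hq, ← neg_sub, mul_neg, div_neg, ← neg_div,
    div_mul_eq_div_div_swap, div_I]
  ring

theorem exp_I_mul_ne_exp_I_mul {s t : ℂ}
    (h : ∀ n : ℤ, s - t ≠ ((2 * Real.pi * n : ℝ) : ℂ)) : exp (I * s) ≠ exp (I * t) := by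
  rw [Ne, exp_eq_exp_iff_exists_int]
  rintro ⟨n, hn⟩
  refine h n (mul_left_cancel₀ I_ne_zero ?_)
  push_cast
  linear_combination hn

theorem hasDerivAt_exp_I_mul (z : ℂ) : HasDerivAt (fun x => exp (I * x)) (I * exp (I * z)) z := by
  simpa [mul_comm] using ((hasDerivAt_id z).const_mul I).cexp

theorem hasDerivAt_mobius {a b c d u : ℂ} (hu : c * u + d ≠ 0) :
    HasDerivAt (fun x => (a * x + b) / (c * x + d)) ((a * d - b * c) / (c * u + d) ^ 2) u :=
  ((((hasDerivAt_id' u).const_mul a).add_const b).div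
    (((hasDerivAt_id' u).const_mul c).add_const d) hu).congr_deriv (by ring)

theorem hasDerivAt_mul_logDeriv_mobius {a b c d u : ℂ} (hp : a * u + b ≠ 0)
    (hq : c * u + d ≠ 0) :
    HasDerivAt (fun x => (a * d - b * c) * x / ((a * x + b) * (c * x + d)))
      ((a * d - b * c) * (b * d - a * c * u ^ 2) / ((a * u + b) * (c * u + d)) ^ 2) u :=
  (((hasDerivAt_id' u).const_mul (a * d - b * c)).div
    ((((hasDerivAt_id' u).const_mul a).add_const b).mul
      (((hasDerivAt_id' u).const_mul c).add_const d)) (mul_ne_zero hp hq)).congr_deriv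
    (by simp only [Pi.mul_apply]; ring)

theorem hasDerivAt_of_exp_I_mul_eq {f g : ℂ → ℂ} {g' z : ℂ} (hf : DifferentiableAt ℂ f z)
    (hg : HasDerivAt g g' (exp (I * z)))
    (hfg : (fun x => exp (I * f x)) =ᶠ[𝓝 z] fun x => g (exp (I * x))) :
    HasDerivAt f (exp (I * z) * g' / g (exp (I * z))) z := by
  have key := (hf.hasDerivAt.const_mul I).cexp.unique
    ((hg.comp z (hasDerivAt_exp_I_mul z)).congr_of_eventuallyEq hfg)
  refine hf.hasDerivAt.congr_deriv ?_
  rw [← hfg.eq_of_nhds, eq_div_iff (exp_ne_zero _)]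
  refine mul_left_cancel₀ I_ne_zero ?_
  linear_combination key

theorem mobius_sub_mobius {a b c d u v : ℂ} (hu : c * u + d ≠ 0) (hv : c * v + d ≠ 0) :
    (a * u + b) / (c * u + d) - (a * v + b) / (c * v + d)
      = (a * d - b * c) * (u - v) / ((c * u + d) * (c * v + d)) := by
  rw [div_sub_div _ _ hu hv]
  ring

theorem mobius_cot_rational_identity {a b c d u v : ℂ} (hu : u ≠ 0)
    (hpu : a * u + b ≠ 0) (hqu : c * u + d ≠ 0) (hqv : c * v + d ≠ 0)
    (hne : (a * u + b) / (c * u + d) ≠ (a * v + b) / (c * v + d)) :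
    (a * d - b * c) * u / ((a * u + b) * (c * u + d))
        * (I * ((a * u + b) / (c * u + d) + (a * v + b) / (c * v + d))
          / ((a * u + b) / (c * u + d) - (a * v + b) / (c * v + d)))
      - I * (u + v) / (u - v)
      = (a * d - b * c) * (b * d - a * c * u ^ 2) / ((a * u + b) * (c * u + d)) ^ 2 * (I * u)
        / ((a * d - b * c) * u / ((a * u + b) * (c * u + d))) := by
  have hsub := sub_ne_zero.mpr hne
  rw [mobius_sub_mobius hqu hqv] at hsub ⊢
  obtain ⟨hdet, huv⟩ := mul_ne_zero_iff.mp (div_ne_zero_iff.mp hsub).1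
  field_simp
  ring

section Lift

variable {a b c d : ℂ} {f : ℂ → ℂ} {Ω : Set ℂ}

theorem mobius_factors_ne_zero_of_exp_I_mul_eq
    (hlift : ∀ x ∈ Ω, exp (I * f x) = (a * exp (I * x) + b) / (c * exp (I * x) + d))
    {x : ℂ} (hx : x ∈ Ω) : a * exp (I * x) + b ≠ 0 ∧ c * exp (I * x) + d ≠ 0 :=
  div_ne_zero_iff.mp (hlift x hx ▸ exp_ne_zero _)

theorem hasDerivAt_of_exp_I_mul_eq_mobius (hΩ : IsOpen Ω) (hf : DifferentiableOn ℂ f Ω)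
    (hlift : ∀ x ∈ Ω, exp (I * f x) = (a * exp (I * x) + b) / (c * exp (I * x) + d))
    {z : ℂ} (hz : z ∈ Ω) :
    HasDerivAt f ((a * d - b * c) * exp (I * z)
      / ((a * exp (I * z) + b) * (c * exp (I * z) + d))) z := by
  obtain ⟨hp, hq⟩ := mobius_factors_ne_zero_of_exp_I_mul_eq hlift hz
  have hfg : (fun x => exp (I * f x)) =ᶠ[𝓝 z]
      fun x => (a * exp (I * x) + b) / (c * exp (I * x) + d) :=
    eventually_of_mem (hΩ.mem_nhds hz) hlift
  refine (hasDerivAt_of_exp_I_mul_eq (hf.differentiableAt (hΩ.mem_nhds hz))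
    (hasDerivAt_mobius hq) hfg).congr_deriv ?_
  field_simp

theorem deriv_deriv_of_exp_I_mul_eq_mobius (hΩ : IsOpen Ω) (hf : DifferentiableOn ℂ f Ω)
    (hlift : ∀ x ∈ Ω, exp (I * f x) = (a * exp (I * x) + b) / (c * exp (I * x) + d))
    {z : ℂ} (hz : z ∈ Ω) :
    deriv (deriv f) z = (a * d - b * c) * (b * d - a * c * exp (I * z) ^ 2)
      / ((a * exp (I * z) + b) * (c * exp (I * z) + d)) ^ 2 * (I * exp (I * z)) := by
  obtain ⟨hp, hq⟩ := mobius_factors_ne_zero_of_exp_I_mul_eq hlift hz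
  have hderiv : deriv f =ᶠ[𝓝 z] fun x => (a * d - b * c) * exp (I * x)
      / ((a * exp (I * x) + b) * (c * exp (I * x) + d)) :=
    eventually_of_mem (hΩ.mem_nhds hz) fun x hx =>
      (hasDerivAt_of_exp_I_mul_eq_mobius hΩ hf hlift hx).deriv
  rw [hderiv.deriv_eq]
  exact ((hasDerivAt_mul_logDeriv_mobius hp hq).comp z (hasDerivAt_exp_I_mul z)).deriv

end Lift

theorem mobius_cot_identity_radial_general
    (a b c d : ℂ)
    (W : ℂ → ℂ) (hW : ∀ z, W z = (a * z + b) / (c * z + d))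
    (Ω : Set ℂ) (hΩ : IsOpen Ω) (Wt : ℂ → ℂ)
    (hWt : DifferentiableOn ℂ Wt Ω)
    (hlift : ∀ z ∈ Ω, Complex.exp (Complex.I * Wt z) = W (Complex.exp (Complex.I * z)))
    (z w : ℂ) (hzΩ : z ∈ Ω) (hwΩ : w ∈ Ω)
    (h2 : ∀ n : ℤ, Wt z - Wt w ≠ ((2 * Real.pi * n : ℝ) : ℂ)) :
    deriv Wt z * Complex.cot ((Wt z - Wt w) / 2) - Complex.cot ((z - w) / 2)
      = deriv (deriv Wt) z / deriv Wt z := by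
  obtain rfl : W = fun u => (a * u + b) / (c * u + d) := funext hW
  have hne := exp_I_mul_ne_exp_I_mul h2
  rw [hlift z hzΩ, hlift w hwΩ] at hne
  obtain ⟨hpz, hqz⟩ := mobius_factors_ne_zero_of_exp_I_mul_eq hlift hzΩ
  obtain ⟨-, hqw⟩ := mobius_factors_ne_zero_of_exp_I_mul_eq hlift hwΩ
  rw [Complex.cot_half_sub_eq_exp_ratio, Complex.cot_half_sub_eq_exp_ratio, hlift z hzΩ,
    hlift w hwΩ, (hasDerivAt_of_exp_I_mul_eq_mobius hΩ hWt hlift hzΩ).deriv,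
    deriv_deriv_of_exp_I_mul_eq_mobius hΩ hWt hlift hzΩ]
  exact mobius_cot_rational_identity (exp_ne_zero _) hpz hqz hqw hne

/-- Covering version of the Möbius identity: if `W̃` is holomorphic on a domain `Ω` and satisfies
`exp(i W̃ z) = W (exp (i z))` for a Möbius transformation `W`, then for `z, w ∈ Ω` with
`z − w ∉ 2πℤ` and `W̃ z − W̃ w ∉ 2πℤ`,
`W̃'(z) · cot((W̃ z − W̃ w)/2) − cot((z−w)/2) = W̃''(z)/W̃'(z)`. -/
theorem mobius_cot_identity_radial
    (a b c d : ℂ) (hdet : a * d - b * c ≠ 0)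
    (W : ℂ → ℂ) (hW : ∀ z, W z = (a * z + b) / (c * z + d))
    (Ω : Set ℂ) (hΩ : IsOpen Ω) (Wt : ℂ → ℂ)
    (hWt : DifferentiableOn ℂ Wt Ω)
    (hlift : ∀ z ∈ Ω, Complex.exp (Complex.I * Wt z) = W (Complex.exp (Complex.I * z)))
    (z w : ℂ) (hzΩ : z ∈ Ω) (hwΩ : w ∈ Ω)
    (h1 : ∀ n : ℤ, z - w ≠ ((2 * Real.pi * n : ℝ) : ℂ))
    (h2 : ∀ n : ℤ, Wt z - Wt w ≠ ((2 * Real.pi * n : ℝ) : ℂ)) :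
    deriv Wt z * Complex.cot ((Wt z - Wt w) / 2) - Complex.cot ((z - w) / 2)
      = deriv (deriv Wt) z / deriv Wt z :=
  mobius_cot_identity_radial_general a b c d W hW Ω hΩ Wt hWt hlift z w hzΩ hwΩ h2
end

section
/- Let K₁ and K₂ be ℍ-hulls. Then (a) K₁ ⊂ K₁·K₂ and K₂ = (K₁·K₂)/K₁, and (b) the half-plane capacity is additive: hcap(K₁·K₂) = hcap(K₁) + hcap(K₂). -/
open Set Filter

/-- The open upper half-plane. -/
def UHalf : Set ℂ := {z : ℂ | 0 < z.im}

/-- `K` is an `ℍ`-hull: bounded, relatively closed in `ℍ`, with simply connected complement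
`ℍ ∖ K`. -/
structure IsHHull (K : Set ℂ) : Prop where
  subset : K ⊆ UHalf
  bounded : Bornology.IsBounded K
  rel_closed : closure K ∩ UHalf = K
  simply_connected : SimplyConnectedSpace (UHalf \ K : Set ℂ)

/-- `g` is the normalized Loewner map of the `ℍ`-hull `K`, with half-plane capacity `c`:
a conformal bijection of `ℍ ∖ K` onto `ℍ` with `g(z) = z + c/z + o(1/z)` at `∞`. -/
structure IsLoewnerMapOf (K : Set ℂ) (g : ℂ → ℂ) (c : ℝ) : Prop where
  diff : DifferentiableOn ℂ g (UHalf \ K)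
  inj : InjOn g (UHalf \ K)
  image : g '' (UHalf \ K) = UHalf
  norm : Tendsto (fun z => z * (g z - z))
    ((Bornology.cobounded ℂ) ⊓ Filter.principal UHalf) (nhds (c : ℂ))

/-!
Part (a) is set algebra for the inverse pair `f₁, g₁`. For (b), `g₂ ∘ g₁` is a conformal map of
`ℍ ∖ K₁·K₂` onto `ℍ` with expansion `z + (c₁ + c₂)/z + o(1/z)`, so it suffices that the
capacity of such a map is determined by its domain. If `g` and `G` are two of them, with
capacities `c` and `c'`, then `h = g ∘ G⁻¹` is a holomorphic self-map of `ℍ` (open mapping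
theorem and removable singularities) with `h(w) - w → 0` along the curve `w = G(it)`. Julia's
lemma, a limiting case of the Schwarz–Pick lemma, then gives `Im G(it) ≤ Im g(it)`, that is
`t - c'/t ≤ t - c/t + o(1/t)`; hence `c ≤ c'`, and `c = c'` by symmetry.
-/

open Complex ComplexConjugate Bornology Topology

lemma isOpen_UHalf : IsOpen UHalf := isOpen_lt continuous_const continuous_im

lemma ne_zero_of_mem_UHalf {z : ℂ} (hz : z ∈ UHalf) : z ≠ 0 := by
  rintro rfl
  exact lt_irrefl (0 : ℝ) hz

noncomputable abbrev coboundedUHalf : Filter ℂ := cobounded ℂ ⊓ 𝓟 UHalf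

lemma eventually_mem_UHalf : ∀ᶠ z in coboundedUHalf, z ∈ UHalf :=
  mem_inf_of_right (mem_principal_self _)

lemma Bornology.IsBounded.eventually_notMem_coboundedUHalf {K : Set ℂ} (hK : IsBounded K) :
    ∀ᶠ z in coboundedUHalf, z ∉ K :=
  mem_inf_of_left hK

lemma isBounded_of_eventually_notMem {S : Set ℂ} (hS : S ⊆ UHalf)
    (h : ∀ᶠ z in coboundedUHalf, z ∉ S) : IsBounded S := by
  rw [eventually_inf_principal] at h
  exact h.mono fun z hz hzS => hz (hS hzS) hzS

lemma tendsto_ofReal_mul_I_coboundedUHalf :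
    Tendsto (fun t : ℝ => (t : ℂ) * I) atTop coboundedUHalf := by
  refine tendsto_inf.2 ⟨tendsto_norm_atTop_iff_cobounded.1 ?_, tendsto_principal.2 ?_⟩
  · refine tendsto_abs_atTop_atTop.congr fun t => ?_
    simp
  · filter_upwards [eventually_gt_atTop 0] with t ht
    simpa [UHalf] using ht

section Normalization

variable {g : ℂ → ℂ} {c : ℝ}

lemma tendsto_sub_self_of_tendsto_mul_sub
    (hg : Tendsto (fun z => z * (g z - z)) coboundedUHalf (𝓝 (c : ℂ))) :
    Tendsto (fun z => g z - z) coboundedUHalf (𝓝 0) := by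
  have hinv : Tendsto (fun z : ℂ => z⁻¹) coboundedUHalf (𝓝 0) :=
    tendsto_inv₀_cobounded.mono_left inf_le_left
  have hne : ∀ᶠ z in coboundedUHalf, z ≠ 0 :=
    eventually_mem_UHalf.mono fun z hz => ne_zero_of_mem_UHalf hz
  simpa using (hinv.mul hg).congr' (hne.mono fun z hz => by field_simp)

lemma tendsto_coboundedUHalf_of_tendsto_mul_sub
    (hg : Tendsto (fun z => z * (g z - z)) coboundedUHalf (𝓝 (c : ℂ)))
    (hgH : ∀ᶠ z in coboundedUHalf, g z ∈ UHalf) :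
    Tendsto g coboundedUHalf coboundedUHalf := by
  refine tendsto_inf.2 ⟨tendsto_norm_atTop_iff_cobounded.1 ?_, tendsto_principal.2 hgH⟩
  have hz : Tendsto (fun z : ℂ => ‖z‖) coboundedUHalf atTop :=
    tendsto_norm_cobounded_atTop.mono_left inf_le_left
  refine tendsto_atTop_mono (fun z => ?_)
    (hz.atTop_add (tendsto_sub_self_of_tendsto_mul_sub hg).norm.neg)
  have := norm_sub_norm_le z (z - g z)
  rw [sub_sub_cancel, norm_sub_rev] at this
  linarith

lemma tendsto_div_ofReal_of_tendsto_mul_sub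
    (hg : Tendsto (fun z => z * (g z - z)) coboundedUHalf (𝓝 (c : ℂ))) :
    Tendsto (fun t : ℝ => g (t * I) / t) atTop (𝓝 I) := by
  have hsub := (tendsto_sub_self_of_tendsto_mul_sub hg).comp tendsto_ofReal_mul_I_coboundedUHalf
  have hinv : Tendsto (fun t : ℝ => ((t : ℂ))⁻¹) atTop (𝓝 0) := by
    simpa [Function.comp_def] using (continuous_ofReal.tendsto 0).comp tendsto_inv_atTop_zero
  have := (hsub.mul hinv).add_const I
  rw [zero_mul, zero_add] at this
  refine this.congr' ((eventually_ne_atTop 0).mono fun t ht => ?_)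
  have ht' : (t : ℂ) ≠ 0 := ofReal_ne_zero.2 ht
  simp only [Function.comp_apply]
  field_simp
  ring

lemma tendsto_mul_im_sub_of_tendsto_mul_sub
    (hg : Tendsto (fun z => z * (g z - z)) coboundedUHalf (𝓝 (c : ℂ))) :
    Tendsto (fun t : ℝ => t * ((g (t * I)).im - t)) atTop (𝓝 (-c)) := by
  have := ((continuous_re.tendsto _).comp (hg.comp tendsto_ofReal_mul_I_coboundedUHalf)).neg
  refine this.congr fun t => ?_
  simp [mul_re, mul_im]

end Normalization

lemma tendsto_mul_comp_sub {g₁ g₂ : ℂ → ℂ} {c₁ c₂ : ℝ}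
    (hg₁ : Tendsto (fun z => z * (g₁ z - z)) coboundedUHalf (𝓝 (c₁ : ℂ)))
    (hg₁H : ∀ᶠ z in coboundedUHalf, g₁ z ∈ UHalf)
    (hg₂ : Tendsto (fun z => z * (g₂ z - z)) coboundedUHalf (𝓝 (c₂ : ℂ))) :
    Tendsto (fun z => z * (g₂ (g₁ z) - z)) coboundedUHalf (𝓝 ((c₁ + c₂ : ℝ) : ℂ)) := by
  have hg₁_far := tendsto_coboundedUHalf_of_tendsto_mul_sub hg₁ hg₁H
  have hinv : Tendsto (fun z => (g₁ z)⁻¹) coboundedUHalf (𝓝 0) :=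
    tendsto_inv₀_cobounded.comp (hg₁_far.mono_right inf_le_left)
  -- `z / g₁ z = 1 - (g₁ z - z) / g₁ z → 1`
  have hratio : Tendsto (fun z => 1 - (g₁ z - z) * (g₁ z)⁻¹) coboundedUHalf (𝓝 1) := by
    simpa using ((tendsto_sub_self_of_tendsto_mul_sub hg₁).mul hinv).const_sub 1
  have := hg₁.add (hratio.mul (hg₂.comp hg₁_far))
  rw [one_mul, ← ofReal_add] at this
  refine this.congr' (hg₁H.mono fun z hz => ?_)
  have := ne_zero_of_mem_UHalf hz
  simp only [Function.comp_apply]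
  field_simp
  ring

section SchwarzPick

open Metric

lemma sub_conj_ne_zero_of_mem_UHalf {q w : ℂ} (hq : q ∈ UHalf) (hw : w ∈ UHalf) :
    w - conj q ≠ 0 := by
  intro h
  have := congrArg im h
  simp only [sub_im, conj_im, sub_neg_eq_add, zero_im] at this
  exact (add_pos (show (0 : ℝ) < w.im from hw) hq).ne' this

lemma normSq_sub_conj_eq {q w : ℂ} :
    normSq (w - conj q) = normSq (w - q) + 4 * (q.im * w.im) := by
  simp only [normSq_apply, sub_re, sub_im, conj_re, conj_im]
  ring

/-- `(1 - ρ(q, w)²) / 4`, where `ρ` is the pseudo-hyperbolic distance on `ℍ`. -/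
noncomputable def hypKernel (q w : ℂ) : ℝ := q.im * w.im / normSq (w - conj q)

noncomputable def cayley (q w : ℂ) : ℂ := (w - q) / (w - conj q)

noncomputable def cayleySymm (q ω : ℂ) : ℂ := (q - conj q * ω) / (1 - ω)

lemma sq_norm_cayley {q w : ℂ} (hq : q ∈ UHalf) (hw : w ∈ UHalf) :
    ‖cayley q w‖ ^ 2 = 1 - 4 * hypKernel q w := by
  have h := (normSq_pos.2 (sub_conj_ne_zero_of_mem_UHalf hq hw)).ne'
  rw [normSq_sub_conj_eq] at h
  rw [cayley, hypKernel, Complex.sq_norm, normSq_div, normSq_sub_conj_eq, eq_sub_iff_add_eq,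
    mul_div_assoc', ← add_div, div_eq_one_iff_eq h]

lemma cayley_mem_ball {q w : ℂ} (hq : q ∈ UHalf) (hw : w ∈ UHalf) : cayley q w ∈ ball 0 1 := by
  have : 0 < hypKernel q w :=
    div_pos (mul_pos hq hw) (normSq_pos.2 (sub_conj_ne_zero_of_mem_UHalf hq hw))
  rw [mem_ball_zero_iff, ← sq_lt_one_iff₀ (norm_nonneg _), sq_norm_cayley hq hw]
  linarith

lemma cayleySymm_mem_UHalf {q ω : ℂ} (hq : q ∈ UHalf) (hω : ω ∈ ball 0 1) :
    cayleySymm q ω ∈ UHalf := by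
  rw [mem_ball_zero_iff, ← sq_lt_one_iff₀ (norm_nonneg _), Complex.sq_norm, normSq_apply] at hω
  have hq' : (0 : ℝ) < q.im := hq
  have hden : 0 < normSq (1 - ω) := by
    rw [normSq_apply]; simp only [sub_re, one_re, sub_im, one_im]; nlinarith
  show 0 < (cayleySymm q ω).im
  rw [cayleySymm, div_im, div_sub_div_same]
  refine div_pos ?_ hden
  simp only [sub_re, sub_im, mul_re, mul_im, conj_re, conj_im, one_re, one_im]
  nlinarith

lemma cayleySymm_cayley {q w : ℂ} (hq : q ∈ UHalf) (hw : w ∈ UHalf) :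
    cayleySymm q (cayley q w) = w := by
  have hw' := sub_conj_ne_zero_of_mem_UHalf hq hw
  have hqq : q - conj q ≠ 0 := by
    simpa using sub_conj_ne_zero_of_mem_UHalf hq hq
  rw [cayleySymm, cayley, div_eq_iff]
  · field_simp
    ring
  · rw [sub_ne_zero, ne_comm, Ne, div_eq_one_iff_eq hw']
    exact fun h => hqq (by linear_combination -h)

lemma differentiableOn_cayley {q : ℂ} (hq : q ∈ UHalf) :
    DifferentiableOn ℂ (cayley q) UHalf :=
  (differentiableOn_id.sub_const q).div (differentiableOn_id.sub_const _)
    fun _ hw => sub_conj_ne_zero_of_mem_UHalf hq hw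

lemma differentiableOn_cayleySymm (q : ℂ) : DifferentiableOn ℂ (cayleySymm q) (ball 0 1) :=
  ((differentiableOn_const q).sub ((differentiableOn_const _).mul differentiableOn_id)).div
    ((differentiableOn_const 1).sub differentiableOn_id) fun ω hω h => by
      rw [sub_eq_zero] at h
      simp [← h] at hω

/-- **Schwarz–Pick lemma** for the upper half-plane. -/
theorem hypKernel_le_hypKernel {h : ℂ → ℂ} (hd : DifferentiableOn ℂ h UHalf)
    (hm : MapsTo h UHalf UHalf) {p z : ℂ} (hp : p ∈ UHalf) (hz : z ∈ UHalf) :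
    hypKernel p z ≤ hypKernel (h p) (h z) := by
  set S := cayley (h p) ∘ h ∘ cayleySymm p
  have hS : MapsTo S (ball 0 1) (ball 0 1) := fun ω hω =>
    cayley_mem_ball (hm hp) (hm (cayleySymm_mem_UHalf hp hω))
  have hSd : DifferentiableOn ℂ S (ball 0 1) :=
    (differentiableOn_cayley (hm hp)).comp (hd.comp (differentiableOn_cayleySymm p)
      fun ω hω => cayleySymm_mem_UHalf hp hω) (hm.comp fun ω hω => cayleySymm_mem_UHalf hp hω)
  have hS0 : S 0 = 0 := by simp [S, cayleySymm, cayley]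
  have hSz : S (cayley p z) = cayley (h p) (h z) := by
    simp only [S, Function.comp_apply, cayleySymm_cayley hp hz]
  have := norm_le_norm_of_mapsTo_ball hSd (hS.mono_right ball_subset_closedBall) hS0
    (mem_ball_zero_iff.1 (cayley_mem_ball hp hz))
  rw [hSz] at this
  have := pow_le_pow_left₀ (norm_nonneg _) this 2
  rw [sq_norm_cayley hp hz, sq_norm_cayley (hm hp) (hm hz)] at this
  linarith

end SchwarzPick

lemma tendsto_mul_hypKernel (q : ℂ) {w : ℝ → ℂ} (hw : Tendsto (fun t => w t / t) atTop (𝓝 I)) :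
    Tendsto (fun t => t * hypKernel q (w t)) atTop (𝓝 q.im) := by
  have hq : Tendsto (fun t : ℝ => conj q / t) atTop (𝓝 0) := by
    simpa [Function.comp_def, div_eq_mul_inv] using
      ((continuous_ofReal.tendsto 0).comp tendsto_inv_atTop_zero).const_mul (conj q)
  have hlim := ((continuous_im.tendsto I).comp hw).const_mul q.im |>.div
    ((continuous_normSq.tendsto _).comp (hw.sub hq)) (by simp)
  simp only [I_im, mul_one, sub_zero, normSq_I, div_one] at hlim
  refine hlim.congr' ((eventually_gt_atTop 0).mono fun t ht => ?_)
  have ht' : (t : ℂ) ≠ 0 := ofReal_ne_zero.2 ht.ne'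
  simp only [Pi.div_apply, Function.comp_apply, hypKernel, ← sub_div, normSq_div, normSq_ofReal,
    div_ofReal_im]
  field_simp

/-- **Julia's lemma** at `∞` with angular derivative `1`. -/
theorem im_le_im_of_tendsto_div {h : ℂ → ℂ} (hd : DifferentiableOn ℂ h UHalf)
    (hm : MapsTo h UHalf UHalf) {u : ℝ → ℂ} (hu : ∀ᶠ t in atTop, u t ∈ UHalf)
    (hu_lim : Tendsto (fun t => u t / t) atTop (𝓝 I))
    (hhu_lim : Tendsto (fun t => h (u t) / t) atTop (𝓝 I)) {p : ℂ} (hp : p ∈ UHalf) :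
    p.im ≤ (h p).im :=
  le_of_tendsto_of_tendsto (tendsto_mul_hypKernel p hu_lim) (tendsto_mul_hypKernel (h p) hhu_lim)
    ((hu.and (eventually_ge_atTop 0)).mono fun _ ht =>
      mul_le_mul_of_nonneg_left (hypKernel_le_hypKernel hd hm hp ht.1) ht.2)

section LocalInverse

lemma Set.InjOn.not_eventuallyConst {X Y : Type*} [TopologicalSpace X] {f : X → Y} {s : Set X}
    {x : X} [(𝓝[≠] x).NeBot] (hf : InjOn f s) (hs : s ∈ 𝓝 x) : ¬EventuallyConst f (𝓝 x) := by
  intro hc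
  have : Nonempty Y := ⟨f x⟩
  obtain ⟨y, hy⟩ := eventuallyConst_iff_exists_eventuallyEq.1 hc
  have h := hy.and hs
  obtain ⟨z, ⟨hzy, hzs⟩, hzx⟩ :=
    ((h.filter_mono nhdsWithin_le_nhds).and (self_mem_nhdsWithin (s := {x}ᶜ))).exists
  exact hzx (hf hzs (mem_of_mem_nhds hs) (hzy.trans h.self_of_nhds.1.symm))

lemma Set.LeftInvOn.continuousAt_of_nhds_le_map {X Y : Type*} [TopologicalSpace X]
    [TopologicalSpace Y] {f : X → Y} {f' : Y → X} {s : Set X} {x : X} (h : LeftInvOn f' f s)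
    (hs : s ∈ 𝓝 x) (hf : 𝓝 (f x) ≤ map f (𝓝 x)) : ContinuousAt f' (f x) := by
  rw [ContinuousAt, h (mem_of_mem_nhds hs)]
  have hid : Tendsto (f' ∘ f) (𝓝 x) (𝓝 x) :=
    tendsto_id.congr' (eventually_of_mem hs fun z hz => (h hz).symm)
  exact (tendsto_map'_iff.2 hid).mono_left hf

variable {U : Set ℂ} {G : ℂ → ℂ} {z : ℂ}

lemma nhds_le_map_nhds_of_injOn (hU : IsOpen U) (hd : DifferentiableOn ℂ G U) (hi : InjOn G U)
    (hz : z ∈ U) : 𝓝 (G z) ≤ map G (𝓝 z) :=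
  (hd.analyticAt (hU.mem_nhds hz)).eventually_constant_or_nhds_le_map_nhds.resolve_left fun h =>
    hi.not_eventuallyConst (hU.mem_nhds hz) (eventuallyConst_iff_exists_eventuallyEq.2 ⟨_, h⟩)

lemma eventually_deriv_ne_zero_of_injOn (hU : IsOpen U) (hd : DifferentiableOn ℂ G U)
    (hi : InjOn G U) (hz : z ∈ U) : ∀ᶠ w in 𝓝[≠] z, deriv G w ≠ 0 := by
  have han := hd.analyticAt (hU.mem_nhds hz)
  refine han.deriv.eventually_eq_zero_or_eventually_ne_zero.resolve_left fun h =>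
    hi.not_eventuallyConst (hU.mem_nhds hz) ?_
  rw [eventuallyConst_iff_analyticOrderAt_sub_eq_top, ← han.analyticOrderAt_deriv_add_one,
    analyticOrderAt_eq_top.2 h, top_add]

theorem Set.LeftInvOn.differentiableOn_image {F : ℂ → ℂ} (hF : LeftInvOn F G U) (hU : IsOpen U)
    (hd : DifferentiableOn ℂ G U) : DifferentiableOn ℂ F (G '' U) := by
  have hmap : ∀ z ∈ U, 𝓝 (G z) ≤ map G (𝓝 z) := fun z hz =>
    nhds_le_map_nhds_of_injOn hU hd hF.injOn hz
  have himage : ∀ z ∈ U, G '' U ∈ 𝓝 (G z) := fun z hz =>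
    hmap z hz (image_mem_map (hU.mem_nhds hz))
  have hcont : ∀ z ∈ U, ContinuousAt F (G z) := fun z hz =>
    hF.continuousAt_of_nhds_le_map (hU.mem_nhds hz) (hmap z hz)
  have hdiff : ∀ z ∈ U, deriv G z ≠ 0 → DifferentiableAt ℂ F (G z) := fun z hz hGz => by
    have hG := (hd.differentiableAt (hU.mem_nhds hz)).hasDerivAt
    rw [← hF hz] at hG hGz
    exact (hG.of_local_left_inverse (hcont z hz) hGz
      (eventually_of_mem (himage z hz) hF.rightInvOn_image)).differentiableAt
  rintro _ ⟨z, hz, rfl⟩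
  -- `deriv G` has no zeros near `z` but `z` itself, so `F` is differentiable on a punctured
  -- neighbourhood of `G z`; being continuous at `G z`, it is holomorphic there
  refine (analyticAt_of_differentiable_on_punctured_nhds_of_continuousAt ?_
    (hcont z hz)).differentiableAt.differentiableWithinAt
  have hF_punct : Tendsto F (𝓝[≠] (G z)) (𝓝[≠] z) := by
    refine tendsto_nhdsWithin_iff.2 ⟨(hcont z hz).tendsto.mono_left nhdsWithin_le_nhds |>.trans
      (by rw [hF hz]), ?_⟩
    filter_upwards [eventually_nhdsWithin_of_eventually_nhds (himage z hz), self_mem_nhdsWithin]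
      with w hw hwz hFw
    exact hwz (hF.rightInvOn_image hw ▸ congrArg G hFw)
  filter_upwards [hF_punct.eventually (eventually_deriv_ne_zero_of_injOn hU hd hF.injOn hz),
    eventually_nhdsWithin_of_eventually_nhds (himage z hz)]
  rintro _ hv ⟨v, hvU, rfl⟩
  rw [hF hvU] at hv
  exact hdiff v hvU hv

end LocalInverse

section Capacity

variable {K : Set ℂ} {g G : ℂ → ℂ} {c c' : ℝ}

lemma IsLoewnerMapOf.mapsTo (hg : IsLoewnerMapOf K g c) : MapsTo g (UHalf \ K) UHalf :=
  fun _ hz => hg.image ▸ mem_image_of_mem g hz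

lemma IsLoewnerMapOf.eventually_apply_mem_UHalf (hK : IsBounded K) (hg : IsLoewnerMapOf K g c) :
    ∀ᶠ z in coboundedUHalf, g z ∈ UHalf :=
  (eventually_mem_UHalf.and hK.eventually_notMem_coboundedUHalf).mono fun _ hz =>
    hg.mapsTo hz

lemma IsLoewnerMapOf.hcap_le (hK : IsOpen (UHalf \ K)) (hKb : IsBounded K)
    (hg : IsLoewnerMapOf K g c) (hG : IsLoewnerMapOf K G c') : c ≤ c' := by
  set F := Function.invFunOn G (UHalf \ K)
  have hF : LeftInvOn F G (UHalf \ K) := hG.inj.leftInvOn_invFunOn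
  have hFm : MapsTo F UHalf (UHalf \ K) := SurjOn.mapsTo_invFunOn hG.image.superset
  have hd : DifferentiableOn ℂ (g ∘ F) UHalf :=
    hg.diff.comp (hG.image ▸ hF.differentiableOn_image hK hG.diff) hFm
  have haxis : ∀ᶠ t : ℝ in atTop, (t : ℂ) * I ∈ UHalf \ K :=
    tendsto_ofReal_mul_I_coboundedUHalf.eventually
      (eventually_mem_UHalf.and hKb.eventually_notMem_coboundedUHalf)
  -- Julia's lemma for `g ∘ G⁻¹`, along the curve `t ↦ G (t i)`
  have him : ∀ᶠ t : ℝ in atTop, (G (t * I)).im ≤ (g (t * I)).im := haxis.mono fun t ht => by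
    have := im_le_im_of_tendsto_div hd (hg.mapsTo.comp hFm) (haxis.mono fun _ hs => hG.mapsTo hs)
      (tendsto_div_ofReal_of_tendsto_mul_sub hG.norm)
      ((tendsto_div_ofReal_of_tendsto_mul_sub hg.norm).congr' (haxis.mono fun s hs => by
        simp only [Function.comp_apply, hF hs])) (hG.mapsTo ht)
    rwa [Function.comp_apply, hF ht] at this
  have := le_of_tendsto_of_tendsto (tendsto_mul_im_sub_of_tendsto_mul_sub hG.norm)
    (tendsto_mul_im_sub_of_tendsto_mul_sub hg.norm) ((him.and (eventually_ge_atTop 0)).mono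
      fun t ht => mul_le_mul_of_nonneg_left (sub_le_sub_right ht.1 _) ht.2)
  linarith

lemma IsLoewnerMapOf.hcap_eq (hK : IsOpen (UHalf \ K)) (hKb : IsBounded K)
    (hg : IsLoewnerMapOf K g c) (hG : IsLoewnerMapOf K G c') : c = c' :=
  le_antisymm (hg.hcap_le hK hKb hG) (hG.hcap_le hK hKb hg)

end Capacity

lemma IsHHull.isOpen_sdiff {K : Set ℂ} (hK : IsHHull K) : IsOpen (UHalf \ K) := by
  rw [← hK.rel_closed, sdiff_inter_self_eq_sdiff]
  exact isOpen_UHalf.sdiff isClosed_closure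

section Product

variable {K₁ K₂ : Set ℂ} {g₁ g₂ f₁ : ℂ → ℂ} {c₁ c₂ : ℝ}

lemma IsLoewnerMapOf.inverse_mapsTo (hg₁ : IsLoewnerMapOf K₁ g₁ c₁)
    (hf₁ : InvOn f₁ g₁ (UHalf \ K₁) UHalf) : MapsTo f₁ UHalf (UHalf \ K₁) :=
  hf₁.1.mapsTo hg₁.image.superset

lemma image_union_image_sdiff (hf₁ : InvOn f₁ g₁ (UHalf \ K₁) UHalf)
    (hf₁m : MapsTo f₁ UHalf (UHalf \ K₁)) (hK₂ : K₂ ⊆ UHalf) :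
    g₁ '' ((K₁ ∪ f₁ '' K₂) \ K₁) = K₂ := by
  rw [union_sdiff_left,
    (disjoint_sdiff_left.mono_left ((hf₁m.mono_left hK₂).image_subset)).sdiff_eq_left,
    LeftInvOn.image_image' hf₁.2 hK₂]

lemma sdiff_union_image_eq (hf₁ : InvOn f₁ g₁ (UHalf \ K₁) UHalf)
    (hg₁m : MapsTo g₁ (UHalf \ K₁) UHalf) (hK₂ : K₂ ⊆ UHalf) :
    UHalf \ (K₁ ∪ f₁ '' K₂) = (UHalf \ K₁) ∩ g₁ ⁻¹' (UHalf \ K₂) := by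
  ext z
  simp only [Set.mem_sdiff, mem_union, mem_image, mem_inter_iff, mem_preimage, not_or, not_exists,
    not_and]
  constructor
  · rintro ⟨hz, hz₁, hz₂⟩
    exact ⟨⟨hz, hz₁⟩, hg₁m ⟨hz, hz₁⟩, fun hk => hz₂ _ hk (hf₁.1 ⟨hz, hz₁⟩)⟩
  · rintro ⟨⟨hz, hz₁⟩, -, hz₂⟩
    refine ⟨hz, hz₁, fun k hk hkz => hz₂ ?_⟩
    rwa [← hkz, hf₁.2 (hK₂ hk)]

lemma isBounded_union_image (hK₁ : IsBounded K₁) (hK₂ : K₂ ⊆ UHalf) (hK₂b : IsBounded K₂)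
    (hg₁ : IsLoewnerMapOf K₁ g₁ c₁) (hf₁ : InvOn f₁ g₁ (UHalf \ K₁) UHalf) :
    IsBounded (K₁ ∪ f₁ '' K₂) := by
  refine hK₁.union (isBounded_of_eventually_notMem
    (((hg₁.inverse_mapsTo hf₁).mono_left hK₂).image_subset.trans sdiff_subset) ?_)
  -- far out, `g₁` stays far out, hence avoids `K₂`
  filter_upwards [(tendsto_coboundedUHalf_of_tendsto_mul_sub hg₁.norm
    (hg₁.eventually_apply_mem_UHalf hK₁)).eventually hK₂b.eventually_notMem_coboundedUHalf]
  rintro _ hk ⟨k, hk₂, rfl⟩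
  exact hk (by rwa [hf₁.2 (hK₂ hk₂)])

lemma IsLoewnerMapOf.comp_of_invOn (hK₁ : IsBounded K₁) (hK₂ : K₂ ⊆ UHalf)
    (hg₁ : IsLoewnerMapOf K₁ g₁ c₁) (hg₂ : IsLoewnerMapOf K₂ g₂ c₂)
    (hf₁ : InvOn f₁ g₁ (UHalf \ K₁) UHalf) :
    IsLoewnerMapOf (K₁ ∪ f₁ '' K₂) (g₂ ∘ g₁) (c₁ + c₂) := by
  have hU := sdiff_union_image_eq hf₁ hg₁.mapsTo hK₂
  have hmaps : MapsTo g₁ ((UHalf \ K₁) ∩ g₁ ⁻¹' (UHalf \ K₂)) (UHalf \ K₂) := fun _ hz => hz.2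
  refine ⟨?_, ?_, ?_, tendsto_mul_comp_sub (g₁ := g₁) (g₂ := g₂) hg₁.norm
    (hg₁.eventually_apply_mem_UHalf hK₁) hg₂.norm⟩
  · rw [hU]
    exact hg₂.diff.comp (hg₁.diff.mono inter_subset_left) hmaps
  · rw [hU]
    exact hg₂.inj.comp (hg₁.inj.mono inter_subset_left) hmaps
  · rw [hU, image_comp, image_inter_preimage, hg₁.image, inter_eq_right.2 sdiff_subset, hg₂.image]

end Product

/-- For `ℍ`-hulls `K₁, K₂` with product `K₁·K₂ = K₁ ∪ f_{K₁}(K₂)`: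
(a) `K₁ ⊆ K₁·K₂` and `K₂ = (K₁·K₂)/K₁ = g_{K₁}((K₁·K₂) ∖ K₁)`;
(b) half-plane capacity is additive: `hcap(K₁·K₂) = hcap K₁ + hcap K₂`. -/
theorem hull_product_quotient_and_hcap_add
    (K1 K2 : Set ℂ) (g1 g2 f1 : ℂ → ℂ) (c1 c2 : ℝ)
    (h1 : IsHHull K1) (h2 : IsHHull K2)
    (hg1 : IsLoewnerMapOf K1 g1 c1) (hg2 : IsLoewnerMapOf K2 g2 c2)
    (hf1 : Set.InvOn f1 g1 (UHalf \ K1) UHalf) :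
    K1 ⊆ K1 ∪ f1 '' K2 ∧
    g1 '' ((K1 ∪ f1 '' K2) \ K1) = K2 ∧
    ∀ (g : ℂ → ℂ) (c : ℝ), IsLoewnerMapOf (K1 ∪ f1 '' K2) g c → c = c1 + c2 := by
  refine ⟨subset_union_left,
    image_union_image_sdiff hf1 (hg1.inverse_mapsTo hf1) h2.subset, fun g c hg => ?_⟩
  have hopen : IsOpen (UHalf \ (K1 ∪ f1 '' K2)) := by
    rw [sdiff_union_image_eq hf1 hg1.mapsTo h2.subset]
    exact hg1.diff.continuousOn.isOpen_inter_preimage h1.isOpen_sdiff h2.isOpen_sdiff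
  exact hg.hcap_eq hopen (isBounded_union_image h1.bounded h2.subset h2.bounded hg1 hf1)
    (hg1.comp_of_invOn h1.bounded h2.subset hg2 hf1)
end

section
/- Let K be an ℍ-hull with extended conformal map f_K : Ĉ∖S_K → Ĉ∖K̂. Then f_K cannot be extended analytically to any strictly larger open subset of Ĉ; i.e., f_K has no analytic continuation across any point of its support S_K. -/
open Set Filter

/-- The real line, as a subset of `ℂ`. -/
def RLine : Set ℂ := {z : ℂ | z.im = 0}

/-- The double `K̂ = K ∪ I_ℝ(K) ∪ B_K` of an `ℍ`-hull `K`, where `I_ℝ` is complex conjugation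
and `B_K = cl(K) ∩ ℝ` is the base. -/
def doubleHull (K : Set ℂ) : Set ℂ :=
  K ∪ (fun z => (starRingEnd ℂ) z) '' K ∪ (closure K ∩ RLine)

/-- An `ℍ`-hull `K` together with its support `S = S_K ⊆ ℝ` and the Schwarz-reflected conformal
map `f = f_K : Ĉ ∖ S_K → Ĉ ∖ K̂` (with inverse `g = g_K`), normalized by `f(z) − z → 0` at `∞`,
restricting to the inverse Loewner map `ℍ → ℍ ∖ K`. -/
structure HullData where
  K : Set ℂ
  S : Set ℂ
  f : ℂ → ℂ
  g : ℂ → ℂ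
  hull_subset : K ⊆ UHalf
  hull_bounded : Bornology.IsBounded K
  hull_rel_closed : closure K ∩ UHalf = K
  hull_simply_connected : SimplyConnectedSpace (UHalf \ K : Set ℂ)
  S_compact : IsCompact S
  S_real : S ⊆ RLine
  f_diff : DifferentiableOn ℂ f Sᶜ
  f_inj : InjOn f Sᶜ
  f_image : f '' Sᶜ = (doubleHull K)ᶜ
  f_inv : Set.InvOn g f Sᶜ (doubleHull K)ᶜ
  f_norm : Tendsto (fun z => f z - z) (Bornology.cobounded ℂ) (nhds 0)
  f_maps : MapsTo f UHalf (UHalf \ K)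
  f_surj_half : f '' (UHalf \ S) = UHalf \ K

/-!
Suppose `h` is holomorphic on an open `U ⊋ Ĉ ∖ S_K` and agrees with `f_K` off `S_K`, and pick
`x ∈ U ∩ S_K`. Since `f_K` maps the upper half-plane into itself and the lower half-plane into
`{Im ≤ 0}`, continuity forces `h x` to be real; since `f_K` is injective, `h` is not constant near
`x`, so `h` is an open map at `x`. Now `h x` cannot lie in the closure of `K`, because the
neighbourhood `h(U)` of `h x` avoids `K`; nor can it equal `f_K u` for some `u ∉ S_K`, because
then `h` near `x` and `f_K` near `u` would both cover the non-real points near `h x`, against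
injectivity. But `f_K` maps `Ĉ ∖ S_K` onto the complement of `K̂`, and the real points of `K̂` lie
in the closure of `K`.
-/

open Topology

theorem mem_closure_upperHalf_of_im_eq_zero {y : ℂ} (hy : y.im = 0) : y ∈ closure UHalf := by
  rw [UHalf, Complex.closure_setOfPred_lt_im]
  exact hy.ge

theorem im_eq_zero_of_continuousAt {g : ℂ → ℂ} {x : ℂ} (hx : x.im = 0) (hg : ContinuousAt g x)
    (hup : ∀ z, 0 < z.im → 0 ≤ (g z).im) (hdown : ∀ z, z.im < 0 → (g z).im ≤ 0) :
    (g x).im = 0 := by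
  have him : ContinuousAt (fun z => (g z).im) x := Complex.continuous_im.continuousAt.comp hg
  refine le_antisymm ?_ ?_
  · exact ContinuousWithinAt.closure_le (s := {z : ℂ | z.im < 0}) (by simp [hx])
      him.continuousWithinAt continuousWithinAt_const hdown
  · exact ContinuousWithinAt.closure_le (mem_closure_upperHalf_of_im_eq_zero hx)
      continuousWithinAt_const him.continuousWithinAt hup

theorem not_eventually_eq_of_injOn {g : ℂ → ℂ} {V : Set ℂ} {x : ℂ} (hV : IsOpen V)
    (hinj : InjOn g V) (hx : x ∈ closure V) : ¬ ∀ᶠ z in 𝓝 x, g z = g x := by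
  intro hconst
  obtain ⟨W, hWconst, hWo, hxW⟩ := eventually_nhds_iff.mp hconst
  obtain ⟨z, hzW, hzV⟩ := mem_closure_iff.mp hx W hWo hxW
  obtain ⟨a, ⟨haW, haV⟩, b, ⟨hbW, hbV⟩, hab⟩ :=
    (infinite_of_mem_nhds z ((hWo.inter hV).mem_nhds ⟨hzW, hzV⟩)).nontrivial
  exact hab (hinj haV hbV ((hWconst a haW).trans (hWconst b hbW).symm))

theorem AnalyticAt.nhds_le_map_nhds_of_injOn {g : ℂ → ℂ} {V : Set ℂ} {x : ℂ}
    (hg : AnalyticAt ℂ g x) (hV : IsOpen V) (hinj : InjOn g V) (hx : x ∈ closure V) :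
    𝓝 (g x) ≤ map g (𝓝 x) :=
  hg.eventually_constant_or_nhds_le_map_nhds.resolve_left (not_eventually_eq_of_injOn hV hinj hx)

theorem mem_closure_of_mem_doubleHull {K : Set ℂ} (hK : K ⊆ UHalf) {y : ℂ}
    (hy : y ∈ doubleHull K) (him : y.im = 0) : y ∈ closure K := by
  rcases hy with (hyK | ⟨k, hk, rfl⟩) | hbase
  · exact absurd him (hK hyK).ne'
  · exact absurd him (by simpa using (hK hk).ne')
  · exact hbase.1

namespace HullData

variable (D : HullData)

theorem mem_compl_S_of_im_ne_zero {z : ℂ} (hz : z.im ≠ 0) : z ∈ D.Sᶜ :=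
  fun hS => hz (D.S_real hS)

theorem upperHalf_subset_compl_S : UHalf ⊆ D.Sᶜ :=
  fun _ hz => D.mem_compl_S_of_im_ne_zero (ne_of_gt hz)

theorem isOpen_compl_S : IsOpen D.Sᶜ :=
  D.S_compact.isClosed.isOpen_compl

theorem image_upperHalf : D.f '' UHalf = UHalf \ D.K := by
  rw [← D.f_surj_half,
    sdiff_eq_left.mpr (subset_compl_iff_disjoint_right.mp D.upperHalf_subset_compl_S)]

theorem f_notMem_doubleHull {z : ℂ} (hz : z ∈ D.Sᶜ) : D.f z ∉ doubleHull D.K := by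
  rw [← mem_compl_iff, ← D.f_image]
  exact mem_image_of_mem _ hz

theorem f_notMem_K {z : ℂ} (hz : z ∈ D.Sᶜ) : D.f z ∉ D.K :=
  fun hK => D.f_notMem_doubleHull hz (Or.inl (Or.inl hK))

theorem im_f_nonpos {z : ℂ} (hz : z ∈ D.Sᶜ) (him : z.im ≤ 0) : (D.f z).im ≤ 0 := by
  by_contra! hpos
  obtain ⟨u, hu, hfu⟩ : D.f z ∈ D.f '' UHalf := D.image_upperHalf ▸ ⟨hpos, D.f_notMem_K hz⟩
  have huz : u = z := D.f_inj (D.upperHalf_subset_compl_S hu) hz hfu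
  exact (huz ▸ hu : 0 < z.im).not_ge him

section Extension

variable {D} {U : Set ℂ} {h : ℂ → ℂ} (hU : IsOpen U) (hh : DifferentiableOn ℂ h U)
  (heq : EqOn h D.f D.Sᶜ)
include hU hh heq

theorem im_extension_eq_zero {x : ℂ} (hxU : x ∈ U) (hxS : x ∈ D.S) : (h x).im = 0 := by
  refine im_eq_zero_of_continuousAt (D.S_real hxS)
    (hh.differentiableAt (hU.mem_nhds hxU)).continuousAt (fun z hz => ?_) (fun z hz => ?_)
  · rw [heq (D.upperHalf_subset_compl_S hz)]
    exact (D.f_maps hz).1.le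
  · have hzS := D.mem_compl_S_of_im_ne_zero hz.ne
    rw [heq hzS]
    exact D.im_f_nonpos hzS hz.le

theorem extension_notMem_K {z : ℂ} (hzU : z ∈ U) : h z ∉ D.K := by
  by_cases hzS : z ∈ D.S
  · exact fun hK => (D.hull_subset hK).ne' (im_extension_eq_zero hU hh heq hzU hzS)
  · exact heq hzS ▸ D.f_notMem_K hzS

theorem nhds_le_map_extension {x : ℂ} (hxU : x ∈ U) (hxS : x ∈ D.S) :
    𝓝 (h x) ≤ map h (𝓝 x) :=
  (hh.analyticAt (hU.mem_nhds hxU)).nhds_le_map_nhds_of_injOn D.isOpen_compl_S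
    (D.f_inj.congr heq.symm)
    (closure_mono D.upperHalf_subset_compl_S (mem_closure_upperHalf_of_im_eq_zero (D.S_real hxS)))

theorem extension_notMem_closure_K {x : ℂ} (hxU : x ∈ U) (hxS : x ∈ D.S) :
    h x ∉ closure D.K := by
  intro hcl
  obtain ⟨_, ⟨z, hzU, rfl⟩, hzK⟩ := mem_closure_iff_nhds.mp hcl _
    (nhds_le_map_extension hU hh heq hxU hxS (image_mem_map (hU.mem_nhds hxU)))
  exact extension_notMem_K hU hh heq hzU hzK

theorem extension_notMem_image_f {x : ℂ} (hxU : x ∈ U) (hxS : x ∈ D.S) :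
    h x ∉ D.f '' D.Sᶜ := by
  rintro ⟨u, hu, hfu⟩
  obtain ⟨Bu, Bx, hBu, hBx, huB, hxB, hdisj⟩ := t2_separation fun hux : u = x => hu (hux ▸ hxS)
  have hx_nhds : h '' (Bx ∩ U) ∈ 𝓝 (h x) := nhds_le_map_extension hU hh heq hxU hxS
    (image_mem_map (inter_mem (hBx.mem_nhds hxB) (hU.mem_nhds hxU)))
  have hu_nhds : D.f '' (Bu ∩ D.Sᶜ) ∈ 𝓝 (h x) := hfu ▸
    (D.f_diff.analyticAt (D.isOpen_compl_S.mem_nhds hu)).nhds_le_map_nhds_of_injOn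
      D.isOpen_compl_S D.f_inj (subset_closure hu)
      (image_mem_map (inter_mem (hBu.mem_nhds huB) (D.isOpen_compl_S.mem_nhds hu)))
  obtain ⟨w, ⟨⟨z, ⟨hzB, hzU⟩, hzw⟩, ⟨v, ⟨hvB, hvS⟩, hvw⟩⟩, hw⟩ :=
    mem_closure_iff_nhds.mp
      (mem_closure_upperHalf_of_im_eq_zero (im_extension_eq_zero hU hh heq hxU hxS)) _
      (inter_mem hx_nhds hu_nhds)
  have hzS : z ∈ D.Sᶜ := fun hzS =>
    (show (0 : ℝ) < w.im from hw).ne' (hzw ▸ im_extension_eq_zero hU hh heq hzU hzS)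
  have hzv : z = v := D.f_inj hzS hvS ((heq hzS).symm.trans (hzw.trans hvw.symm))
  exact hdisj.ne_of_mem hvB hzB hzv.symm

end Extension

end HullData

/-- The reflected map `f_K : Ĉ ∖ S_K → Ĉ ∖ K̂` of an `ℍ`-hull cannot be continued analytically
to any strictly larger open set: no holomorphic function on an open set strictly containing
`Ĉ ∖ S_K` agrees with `f_K` there. -/
theorem fK_no_analytic_extension (D : HullData)
    (U : Set ℂ) (hU : IsOpen U) (hss : D.Sᶜ ⊂ U) :
    ¬ ∃ h : ℂ → ℂ, DifferentiableOn ℂ h U ∧ Set.EqOn h D.f D.Sᶜ := by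
  rintro ⟨h, hh, heq⟩
  obtain ⟨x, hxU, hxS⟩ := exists_of_ssubset hss
  rw [notMem_compl_iff] at hxS
  have hdouble : h x ∈ doubleHull D.K := by
    by_contra hy
    exact HullData.extension_notMem_image_f hU hh heq hxU hxS (D.f_image ▸ hy)
  exact HullData.extension_notMem_closure_K hU hh heq hxU hxS
    (mem_closure_of_mem_doubleHull D.hull_subset hdouble
      (HullData.im_extension_eq_zero hU hh heq hxU hxS))
end

section
/- For any M < ∞, the set of 𝔻-hulls H with dcap(H) ≤ M is compact (in the topology of locally uniform convergence on 𝔻 of the maps f_H). -/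
open Set Filter

/-- The open unit disk. -/
noncomputable def UDisk : Set ℂ := Metric.ball 0 1

/-- `f = f_H` is the inverse Loewner map of the `𝔻`-hull `H` with disk capacity `c = dcap H`:
`H` is relatively closed in `𝔻`, `𝔻 ∖ H` is a simply connected domain containing `0`, and `f`
maps `𝔻` conformally onto `𝔻 ∖ H` with `f(0) = 0` and `f'(0) = e^{-c} > 0` (so that
`g_H = f⁻¹` satisfies `g_H(0) = 0`, `g_H'(0) = e^{c}`, `c ≥ 0`). -/
structure IsDiskLoewnerMapOf (H : Set ℂ) (f : ℂ → ℂ) (c : ℝ) : Prop where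
  hull_subset : H ⊆ UDisk
  rel_closed : closure H ∩ UDisk = H
  zero_mem : (0 : ℂ) ∈ UDisk \ H
  simply_connected : SimplyConnectedSpace (UDisk \ H : Set ℂ)
  diff : DifferentiableOn ℂ f UDisk
  inj : InjOn f UDisk
  image : f '' UDisk = UDisk \ H
  map_zero : f 0 = 0
  deriv_zero : deriv f 0 = (Real.exp (-c) : ℝ)
  c_nonneg : 0 ≤ c

/-!
The capacities lie in the compact interval `[0, M]`, and the maps `f_H` are holomorphic self-maps
of `𝔻`, hence equicontinuous on `𝔻` by the Schwarz lemma. By Arzelà–Ascoli (Montel's theorem) a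
subsequence of the capacities converges to some `c` and the corresponding maps converge locally
uniformly to a holomorphic `f`, with `f 0 = 0` and `f' 0 = e^{-c} ≠ 0`. So `f` is not constant:
by Hurwitz's theorem it is injective, and by the open mapping theorem `f(𝔻)` is open, hence lies
in the interior `𝔻` of the closed disk. As a homeomorphic image of `𝔻`, `f(𝔻)` is simply
connected, so `𝔻 ∖ f(𝔻)` is a `𝔻`-hull with map `f` and capacity `c ≤ M`.
-/

open Metric Topology
open scoped Uniformity

section ArzelaAscoli

variable {X α : Type*} [TopologicalSpace X] [LocallyCompactSpace X] [SecondCountableTopology X]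
  [UniformSpace α] [T2Space α] [IsCountablyGenerated (𝓤 α)]

theorem EquicontinuousOn.exists_subseq_tendstoLocallyUniformlyOn {F : ℕ → X → α} {U : Set X}
    (hU : IsOpen U) (hF : EquicontinuousOn F U)
    (hbdd : ∀ x ∈ U, ∃ Q, IsCompact Q ∧ ∀ n, F n x ∈ Q) :
    ∃ φ : ℕ → ℕ, StrictMono φ ∧ ∃ g : X → α, TendstoLocallyUniformlyOn (F ∘ φ) g atTop U := by
  set 𝔖 : Set (Set X) := {L | L ⊆ U ∧ IsCompact L}
  have : LocallyCompactSpace U := hU.locallyCompactSpace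
  -- An exhaustion of `U` by compacts gives the uniformity of convergence on compacta of `U` a
  -- countable basis, so the compactness given by Arzelà–Ascoli is sequential.
  let K := CompactExhaustion.choice U
  have : IsCountablyGenerated (𝓤 (UniformOnFun X α 𝔖)) :=
    UniformOnFun.isCountablyGenerated_uniformity (𝔖 := 𝔖) (t := fun n => ((↑) : U → X) '' K n)
      (ht := fun n => ⟨by simp, (K.isCompact n).image continuous_subtype_val⟩)
      (hmono := fun m n hmn => image_mono (K.subset hmn))
      (hex := fun L ⟨hLU, hL⟩ => by
        have hL' : IsCompact (((↑) : U → X) ⁻¹' L) := Subtype.isCompact_iff.mpr <| by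
          rwa [Subtype.image_preimage_coe, inter_eq_right.mpr hLU]
        obtain ⟨n, hn⟩ := K.exists_superset_of_isCompact hL'
        exact ⟨n, fun x hx => ⟨⟨x, hLU hx⟩, hn hx, rfl⟩⟩)
  have hcl : IsCompact (closure (range (UniformOnFun.ofFun 𝔖 ∘ F))) :=
    ArzelaAscoli.isCompact_closure_of_isClosedEmbedding (F := UniformOnFun.toFun 𝔖)
      (fun L hL => hL.2) .id
      (fun L hL => equicontinuousOn_iff_range.mp (hF.mono hL.1))
      (fun L hL x hx => (hbdd x (hL.1 hx)).imp fun Q hQ => ⟨hQ.1, by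
        rintro _ ⟨n, rfl⟩; exact hQ.2 n⟩)
  obtain ⟨g, -, φ, hφ, hlim⟩ := hcl.isSeqCompact fun n => subset_closure (mem_range_self n)
  refine ⟨φ, hφ, UniformOnFun.toFun 𝔖 g, ?_⟩
  rw [tendstoLocallyUniformlyOn_iff_forall_isCompact hU]
  exact fun L hLU hL => UniformOnFun.tendsto_iff_tendstoUniformlyOn.mp hlim L ⟨hLU, hL⟩

end ArzelaAscoli

theorem image_subset_ball_of_tendsto {ι X E : Type*} [NormedAddCommGroup E] [NormedSpace ℝ E]
    {l : Filter ι} [l.NeBot] {f : ι → X → E} {g : X → E} {U : Set X} {c : E} {r : ℝ} (hr : r ≠ 0)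
    (hlim : ∀ z ∈ U, Tendsto (fun i => f i z) l (𝓝 (g z)))
    (hmaps : ∀ i, MapsTo (f i) U (closedBall c r)) (hopen : IsOpen (g '' U)) :
    g '' U ⊆ ball c r := by
  refine (interior_maximal ?_ hopen).trans (interior_closedBall c hr).subset
  rintro _ ⟨z, hz, rfl⟩
  exact isClosed_closedBall.mem_of_tendsto (hlim z hz) (.of_forall fun i => hmaps i hz)

section Holomorphic

variable {E F : Type*} [NormedAddCommGroup E] [NormedSpace ℂ E] [NormedAddCommGroup F]
  [NormedSpace ℂ F]

theorem equicontinuousOn_of_mapsTo_closedBall {ι : Type*} {f : ι → E → F} {U : Set E}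
    (hU : IsOpen U) (hd : ∀ i, DifferentiableOn ℂ (f i) U) {c : F} {R : ℝ}
    (hmaps : ∀ i, MapsTo (f i) U (closedBall c R)) : EquicontinuousOn f U := by
  intro x hx
  obtain ⟨r, hr, hrU⟩ := Metric.isOpen_iff.mp hU x hx
  refine (Metric.equicontinuousAt_of_continuity_modulus (fun y => 2 * R / r * dist y x) ?_ f ?_)
    |>.equicontinuousWithinAt U
  · simpa using
      ((continuous_id.dist (continuous_const (y := x))).const_mul (2 * R / r)).tendsto x
  · filter_upwards [ball_mem_nhds x hr] with y hy i
    rw [dist_comm]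
    refine Complex.dist_le_div_mul_dist_of_mapsTo_ball ((hd i).mono hrU) (fun z hz => ?_) hy
    have hz := mem_closedBall.mp (hmaps i (hrU hz))
    have hx := mem_closedBall.mp (hmaps i hx)
    exact mem_closedBall.mpr ((dist_triangle_right _ _ c).trans (by linarith))

theorem exists_subseq_tendstoLocallyUniformlyOn_of_mapsTo_closedBall [ProperSpace E]
    [ProperSpace F] {f : ℕ → E → F} {U : Set E} (hU : IsOpen U)
    (hd : ∀ n, DifferentiableOn ℂ (f n) U) {c : F} {R : ℝ}
    (hmaps : ∀ n, MapsTo (f n) U (closedBall c R)) :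
    ∃ φ : ℕ → ℕ, StrictMono φ ∧ ∃ g : E → F, TendstoLocallyUniformlyOn (f ∘ φ) g atTop U :=
  (equicontinuousOn_of_mapsTo_closedBall hU hd hmaps).exists_subseq_tendstoLocallyUniformlyOn hU
    fun _ hx => ⟨closedBall c R, isCompact_closedBall c R, fun n => hmaps n hx⟩

theorem le_norm_of_forall_mem_frontier_le_norm [Nontrivial E] {g : E → ℂ} {U : Set E}
    (hU : Bornology.IsBounded U) (hd : DiffContOnCl ℂ g U) (hne : ∀ z ∈ closure U, g z ≠ 0) {C : ℝ}
    (hC : ∀ z ∈ frontier U, C ≤ ‖g z‖) {z : E} (hz : z ∈ closure U) : C ≤ ‖g z‖ := by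
  rcases le_or_gt C 0 with hC0 | hC0
  · exact hC0.trans (norm_nonneg _)
  have hinv : ‖(g z)⁻¹‖ ≤ C⁻¹ :=
    Complex.norm_le_of_forall_mem_frontier_norm_le hU (hd.inv hne)
      (fun w hw => by rw [Pi.inv_apply, norm_inv]; exact inv_anti₀ hC0 (hC w hw)) hz
  rwa [norm_inv, inv_le_inv₀ (norm_pos_iff.mpr (hne z hz)) hC0] at hinv

end Holomorphic

theorem TendstoUniformlyOn.ne_zero_at_center {ι : Type*} {l : Filter ι} [l.NeBot]
    {f : ι → ℂ → ℂ} {g : ℂ → ℂ} {a : ℂ} {ρ : ℝ} (hρ : 0 < ρ)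
    (hlim : TendstoUniformlyOn f g l (closedBall a ρ)) (hd : ∀ i, DiffContOnCl ℂ (f i) (ball a ρ))
    (hne : ∀ i, ∀ z ∈ closedBall a ρ, f i z ≠ 0) (hg : ∀ z ∈ sphere a ρ, g z ≠ 0) : g a ≠ 0 := by
  -- Take `f i` uniformly within a third of `min_{sphere} ‖g‖`; the minimum modulus principle for
  -- the zero-free `f i` then keeps `‖f i a‖` above two thirds of it.
  have hcont : ContinuousOn g (closedBall a ρ) := hlim.continuousOn <| .of_forall fun i => by
    simpa [closure_ball a hρ.ne'] using (hd i).continuousOn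
  obtain ⟨z₀, hz₀, hmin⟩ := (isCompact_sphere a ρ).exists_isMinOn
    (NormedSpace.sphere_nonempty.mpr hρ.le) (hcont.mono sphere_subset_closedBall).norm
  have hg₀ : 0 < ‖g z₀‖ := norm_pos_iff.mpr (hg z₀ hz₀)
  obtain ⟨i, hi⟩ := (Metric.tendstoUniformlyOn_iff.mp hlim (‖g z₀‖ / 3) (by positivity)).exists
  have hsphere : ∀ z ∈ sphere a ρ, 2 * ‖g z₀‖ / 3 ≤ ‖f i z‖ := fun z hz => by
    have hclose := hi z (sphere_subset_closedBall hz)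
    rw [dist_eq_norm] at hclose
    linarith [norm_sub_norm_le (g z) (f i z), isMinOn_iff.mp hmin z hz]
  have hcenter : 2 * ‖g z₀‖ / 3 ≤ ‖f i a‖ :=
    le_norm_of_forall_mem_frontier_le_norm isBounded_ball (hd i)
      (by rw [closure_ball a hρ.ne']; exact hne i) (by rwa [frontier_ball a hρ.ne'])
      (subset_closure (mem_ball_self hρ))
  have hclose := hi a (mem_closedBall_self hρ.le)
  rw [dist_eq_norm'] at hclose
  rw [← norm_pos_iff]
  linarith [norm_sub_norm_le (f i a) (g a)]

theorem TendstoLocallyUniformlyOn.exists_eq_const_or_injOn {ι : Type*} {l : Filter ι} [l.NeBot]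
    {f : ι → ℂ → ℂ} {g : ℂ → ℂ} {U : Set ℂ} (hlim : TendstoLocallyUniformlyOn f g l U)
    (hU : IsOpen U) (hUc : IsPreconnected U) (hd : ∀ i, DifferentiableOn ℂ (f i) U)
    (hinj : ∀ i, InjOn (f i) U) : (∃ w, ∀ z ∈ U, g z = w) ∨ InjOn g U := by
  -- If `g a = g b` with `a ≠ b`, Hurwitz's theorem on a small disk around `a` not containing `b`
  -- contradicts the zero-freeness of the functions `f i - f i b` there.
  refine or_iff_not_imp_left.mpr fun hnc a ha b hb hab => by_contra fun hab' => ?_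
  have hana : AnalyticOnNhd ℂ g U := (hlim.differentiableOn (.of_forall hd) hU).analyticOnNhd hU
  have hiso : ∀ᶠ z in 𝓝[≠] a, g z ≠ g b := by
    by_contra h
    rw [not_eventually] at h
    exact hnc ⟨g b, hana.eqOn_of_preconnected_of_frequently_eq analyticOnNhd_const hUc ha
      (by simpa using h)⟩
  obtain ⟨ε, hε, hball⟩ := Metric.mem_nhdsWithin_iff.mp hiso
  obtain ⟨ρ, ⟨hρU, hρε, hρb⟩, hρ⟩ := ((((eventually_closedBall_subset (hU.mem_nhds ha)).and
    ((gt_mem_nhds hε).and (gt_mem_nhds (dist_pos.mpr (Ne.symm hab'))))).filter_mono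
    nhdsWithin_le_nhds).and self_mem_nhdsWithin).exists (f := 𝓝[>] (0 : ℝ))
  have hunif : TendstoUniformlyOn (fun i z => f i z - f i b) (fun z => g z - g b) l
      (closedBall a ρ) :=
    ((tendstoLocallyUniformlyOn_iff_forall_isCompact hU).mp hlim _ hρU
      (isCompact_closedBall a ρ)).sub ((hlim.tendsto_at hb).tendstoUniformlyOn_const _)
  refine hunif.ne_zero_at_center hρ (fun i => ((hd i).sub_const _).diffContOnCl_ball hρU)
    (fun i z hz h => ?_) (fun z hz => sub_ne_zero.mpr (hball ⟨?_, ?_⟩)) (sub_eq_zero.mpr hab)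
  · obtain rfl := hinj i (hρU hz) hb (sub_eq_zero.mp h)
    exact (mem_closedBall.mp hz).not_gt hρb
  · exact mem_ball.mpr ((mem_sphere.mp hz).trans_lt hρε)
  · exact ne_of_mem_sphere hz hρ.ne'

theorem IsSimplyConnected.image_of_injOn {X Y : Type*} [TopologicalSpace X] [TopologicalSpace Y]
    {f : X → Y} {s : Set X} (hsc : IsSimplyConnected s) (hs : IsOpen s) (hf : ContinuousOn f s)
    (hinj : InjOn f s) (hopen : ∀ t ⊆ s, IsOpen t → IsOpen (f '' t)) :
    IsSimplyConnected (f '' s) := by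
  have := hsc.simplyConnectedSpace
  have hemb : IsEmbedding (s.domRestrict f) :=
    (IsOpenEmbedding.of_continuous_injective_isOpenMap hf.domRestrict hinj.injective
      fun u hu => by
        rw [domRestrict_eq, image_comp]
        exact hopen _ (Subtype.coe_image_subset _ _) (hs.isOpenMap_subtype_val u hu)).isEmbedding
  rw [← range_domRestrict]
  exact hemb.toHomeomorph.symm.toHomotopyEquiv.simplyConnectedSpace

theorem isOpen_UDisk : IsOpen UDisk := isOpen_ball

theorem zero_mem_UDisk : (0 : ℂ) ∈ UDisk := mem_ball_self one_pos

theorem convex_UDisk : Convex ℝ UDisk := convex_ball 0 1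

theorem isSimplyConnected_UDisk : IsSimplyConnected UDisk := by
  have := convex_UDisk.contractibleSpace ⟨0, zero_mem_UDisk⟩
  exact (inferInstance : SimplyConnectedSpace UDisk)

theorem isDiskLoewnerMapOf_diff_image {f : ℂ → ℂ} {c : ℝ} (hd : DifferentiableOn ℂ f UDisk)
    (hinj : InjOn f UDisk) (hopen : ∀ s ⊆ UDisk, IsOpen s → IsOpen (f '' s))
    (hsub : f '' UDisk ⊆ UDisk) (h0 : f 0 = 0) (hderiv : deriv f 0 = (Real.exp (-c) : ℝ))
    (hc : 0 ≤ c) : IsDiskLoewnerMapOf (UDisk \ f '' UDisk) f c where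
  hull_subset := sdiff_subset
  rel_closed := by
    refine subset_antisymm (fun z hz => ⟨hz.2, fun hzO => ?_⟩) fun z hz =>
      ⟨subset_closure hz, hz.1⟩
    exact closure_minimal (fun _ h => h.2) (hopen _ subset_rfl isOpen_UDisk).isClosed_compl
      hz.1 hzO
  zero_mem := ⟨zero_mem_UDisk, fun h => h.2 ⟨0, zero_mem_UDisk, h0⟩⟩
  simply_connected := by
    rw [sdiff_sdiff_cancel_left hsub]
    exact isSimplyConnected_UDisk.image_of_injOn isOpen_UDisk hd.continuousOn hinj hopen
  diff := hd
  inj := hinj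
  image := (sdiff_sdiff_cancel_left hsub).symm
  map_zero := h0
  deriv_zero := hderiv
  c_nonneg := hc

/-- Compactness of the set of `𝔻`-hulls of capacity at most `M` (in the topology of locally
uniform convergence of the maps `f_H` on `𝔻`), in sequential form. -/
theorem disk_hulls_bounded_dcap_compact (M : ℝ)
    (H : ℕ → Set ℂ) (f : ℕ → ℂ → ℂ) (c : ℕ → ℝ)
    (hd : ∀ n, IsDiskLoewnerMapOf (H n) (f n) (c n)) (hM : ∀ n, c n ≤ M) :
    ∃ φ : ℕ → ℕ, StrictMono φ ∧ ∃ (Hl : Set ℂ) (fl : ℂ → ℂ) (cl : ℝ),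
      IsDiskLoewnerMapOf Hl fl cl ∧ cl ≤ M ∧
      TendstoLocallyUniformlyOn (fun k => f (φ k)) fl Filter.atTop UDisk := by
  have hmaps n : MapsTo (f n) UDisk UDisk :=
    mapsTo_iff_image_subset.mpr ((hd n).image ▸ sdiff_subset)
  obtain ⟨cl, ⟨hcl0, hclM⟩, ψ, hψ, hcψ⟩ :=
    (isCompact_Icc (a := 0) (b := M)).tendsto_subseq fun n => ⟨(hd n).c_nonneg, hM n⟩
  obtain ⟨φ, hφ, fl, hlim⟩ := exists_subseq_tendstoLocallyUniformlyOn_of_mapsTo_closedBall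
    isOpen_UDisk (fun k => (hd (ψ k)).diff) fun k => (hmaps (ψ k)).mono_right ball_subset_closedBall
  have hdiff : ∀ᶠ k in atTop, DifferentiableOn ℂ (f (ψ (φ k))) UDisk :=
    .of_forall fun _ => (hd _).diff
  have hfl0 : fl 0 = 0 := tendsto_nhds_unique (hlim.tendsto_at zero_mem_UDisk)
    (by simp only [Function.comp_apply, (hd _).map_zero, tendsto_const_nhds])
  have hderiv : deriv fl 0 = (Real.exp (-cl) : ℝ) :=
    tendsto_nhds_unique ((hlim.deriv hdiff isOpen_UDisk).tendsto_at zero_mem_UDisk) <| by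
      simp only [Function.comp_apply, (hd _).deriv_zero]
      exact (Complex.continuous_ofReal.comp (Real.continuous_exp.comp continuous_neg)).tendsto cl
        |>.comp (hcψ.comp hφ.tendsto_atTop)
  have hnc : ¬ ∃ w, ∀ z ∈ UDisk, fl z = w := by
    rintro ⟨w, hw⟩
    have hconst : fl =ᶠ[𝓝 0] fun _ => w :=
      eventually_of_mem (isOpen_UDisk.mem_nhds zero_mem_UDisk) hw
    rw [hconst.deriv_eq, deriv_const] at hderiv
    exact Complex.ofReal_ne_zero.mpr (Real.exp_ne_zero _) hderiv.symm
  have hinj := (hlim.exists_eq_const_or_injOn isOpen_UDisk convex_UDisk.isPreconnected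
    (fun _ => (hd _).diff) fun _ => (hd _).inj).resolve_left hnc
  have hopen := (((hlim.differentiableOn hdiff isOpen_UDisk).analyticOnNhd
    isOpen_UDisk).is_constant_or_isOpen convex_UDisk.isPreconnected).resolve_left hnc
  refine ⟨ψ ∘ φ, hψ.comp hφ, _, fl, cl, isDiskLoewnerMapOf_diff_image
    (hlim.differentiableOn hdiff isOpen_UDisk) hinj hopen ?_ hfl0 hderiv hcl0, hclM, hlim⟩
  exact image_subset_ball_of_tendsto one_ne_zero (fun z hz => hlim.tendsto_at hz)
    (fun _ => (hmaps _).mono_right ball_subset_closedBall) (hopen _ subset_rfl isOpen_UDisk)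
end
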